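/- Let k ≥ 3 and let G be a graph of order n containing a vertex w such that G − w is a disjoint union of t ≥ 2 graphs each isomorphic to some S_{n_i, k−1} (with Σ n_i = n − 1, each n_i ≥ k − 1). Then q(G) < q(S_{n,k}). -/

import Mathlib

open Finset

def Snk (n k : ℕ) : SimpleGraph (Fin n) where
  Adj i j := i ≠ j ∧ (i.val < k ∨ j.val < k)
  symm := ⟨fun i j h => ⟨h.1.symm, h.2.symm⟩⟩
  loopless := ⟨fun i h => h.1 rfl⟩

instance SnkDec (n k : ℕ) : DecidableRel (Snk n k).Adj :=
  fun i j => inferInstanceAs (Decidable (i ≠ j ∧ (i.val < k ∨ j.val < k)))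

def signlessLaplacian {n : ℕ} (G : SimpleGraph (Fin n)) [DecidableRel G.Adj] :
    Matrix (Fin n) (Fin n) ℝ :=
  Matrix.diagonal (fun i => (G.degree i : ℝ)) + G.adjMatrix ℝ

noncomputable def qIndex {n : ℕ} (G : SimpleGraph (Fin n)) [DecidableRel G.Adj] : ℝ :=
  sSup (spectrum ℝ (signlessLaplacian G))

def HasPathOn {V : Type*} (G : SimpleGraph V) (m : ℕ) : Prop :=
  ∃ f : Fin m → V, Function.Injective f ∧
    ∀ (i : ℕ) (h : i + 1 < m), G.Adj (f ⟨i, by omega⟩) (f ⟨i + 1, h⟩)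

def HasCycleOn {V : Type*} (G : SimpleGraph V) (m : ℕ) : Prop :=
  ∃ f : ZMod m → V, Function.Injective f ∧ ∀ i, G.Adj (f i) (f (i + 1))

/-!
Let `G'` be `G` with `w` joined to all other vertices, so `q(G) ≤ q(G')`, and let `D i` be the
`k - 1` clique vertices of the `i`-th part. All vertices of `D i` have the closed neighbourhood
`{w} ∪ P i` in `G'`, so the positive Perron vector `y` of `Q(G')` takes a single value `d i` on
`D i`. Pick `i₀` with `d i₀` maximal and let `H ≅ S_{n,k}` be the graph in which the clique
`{w} ∪ D i₀` is joined to all other vertices. Since `yᵀ Q y = ∑_{uv ∈ E} (y u + y v)²`, passing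
from `G'` to `H` changes the contribution of each part `i ≠ i₀` by
`(k - 1) ∑_{b ∈ P i} ((d i₀ + y b)² - (d i + y b)²) + 2k(k - 1) (d i)² > 0`, hence
`q(G') yᵀ y = yᵀ Q(G') y < yᵀ Q(H) y ≤ q(H) yᵀ y`.
-/

namespace Matrix

variable {ι : Type*} [Fintype ι] [DecidableEq ι] {A : Matrix ι ι ℝ}

lemma le_sSup_spectrum {μ : ℝ} (hμ : μ ∈ spectrum ℝ A) : μ ≤ sSup (spectrum ℝ A) :=
  le_csSup A.finite_real_spectrum.bddAbove hμ

lemma IsHermitian.sSup_spectrum_mem [Nonempty ι] (hA : A.IsHermitian) :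
    sSup (spectrum ℝ A) ∈ spectrum ℝ A := by
  refine Set.Nonempty.csSup_mem ?_ A.finite_real_spectrum
  rw [hA.spectrum_real_eq_range_eigenvalues]
  exact Set.range_nonempty _

lemma IsHermitian.posSemidef_sSup_spectrum_sub (hA : A.IsHermitian) :
    (algebraMap ℝ (Matrix ι ι ℝ) (sSup (spectrum ℝ A)) - A).PosSemidef := by
  refine posSemidef_iff_isHermitian_and_spectrum_nonneg.mpr ⟨?_, ?_⟩
  · exact (isHermitian_diagonal _).sub hA
  · rw [← spectrum.singleton_sub_eq]
    rintro _ ⟨_, rfl, μ, hμ, rfl⟩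
    exact sub_nonneg.mpr (le_sSup_spectrum hμ)

lemma IsHermitian.dotProduct_mulVec_le (hA : A.IsHermitian) (x : ι → ℝ) :
    x ⬝ᵥ (A *ᵥ x) ≤ sSup (spectrum ℝ A) * (x ⬝ᵥ x) := by
  have := hA.posSemidef_sSup_spectrum_sub.dotProduct_mulVec_nonneg x
  rw [star_trivial, sub_mulVec, dotProduct_sub, Algebra.algebraMap_eq_smul_one, smul_mulVec,
    one_mulVec, dotProduct_smul, smul_eq_mul] at this
  linarith

lemma IsHermitian.mulVec_eq_of_dotProduct_mulVec_eq (hA : A.IsHermitian) {x : ι → ℝ}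
    (hx : x ⬝ᵥ (A *ᵥ x) = sSup (spectrum ℝ A) * (x ⬝ᵥ x)) :
    A *ᵥ x = sSup (spectrum ℝ A) • x := by
  have := (hA.posSemidef_sSup_spectrum_sub.dotProduct_mulVec_zero_iff x).mp (by
    rw [star_trivial, sub_mulVec, dotProduct_sub, Algebra.algebraMap_eq_smul_one, smul_mulVec,
      one_mulVec, dotProduct_smul, hx, smul_eq_mul, sub_self])
  rw [sub_mulVec, Algebra.algebraMap_eq_smul_one, smul_mulVec, one_mulVec, sub_eq_zero] at this
  exact this.symm

lemma exists_mulVec_eq_smul_of_mem_spectrum {μ : ℝ} (hμ : μ ∈ spectrum ℝ A) :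
    ∃ x : ι → ℝ, x ≠ 0 ∧ A *ᵥ x = μ • x := by
  rw [← spectrum_toLin', ← Module.End.hasEigenvalue_iff_mem_spectrum] at hμ
  obtain ⟨x, hx⟩ := hμ.exists_hasEigenvector
  exact ⟨x, hx.2, by simpa using hx.apply_eq_smul⟩

lemma IsHermitian.exists_nonneg_mulVec_eq_sSup_spectrum_smul [Nonempty ι] (hA : A.IsHermitian)
    (hA_nonneg : ∀ i j, 0 ≤ A i j) :
    ∃ y : ι → ℝ, y ≠ 0 ∧ 0 ≤ y ∧ A *ᵥ y = sSup (spectrum ℝ A) • y := by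
  obtain ⟨x, hx_ne, hx⟩ := exists_mulVec_eq_smul_of_mem_spectrum hA.sSup_spectrum_mem
  refine ⟨|x|, by simpa using hx_ne, abs_nonneg x, hA.mulVec_eq_of_dotProduct_mulVec_eq ?_⟩
  refine le_antisymm (hA.dotProduct_mulVec_le _) ?_
  have habs : |x| ⬝ᵥ |x| = x ⬝ᵥ x := by simp [dotProduct, abs_mul_abs_self]
  calc sSup (spectrum ℝ A) * (|x| ⬝ᵥ |x|) = x ⬝ᵥ (A *ᵥ x) := by
        rw [habs, hx, dotProduct_smul, smul_eq_mul]
    _ ≤ |x| ⬝ᵥ (A *ᵥ |x|) := by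
        simp only [dotProduct, mulVec, Finset.mul_sum]
        refine Finset.sum_le_sum fun i _ => Finset.sum_le_sum fun j _ => ?_
        calc x i * (A i j * x j) = A i j * (x i * x j) := by ring
          _ ≤ A i j * (|x i| * |x j|) :=
            mul_le_mul_of_nonneg_left ((le_abs_self _).trans (abs_mul _ _).le) (hA_nonneg i j)
          _ = |x| i * (A i j * |x| j) := by simp only [Pi.abs_apply]; ring

end Matrix

open Matrix SimpleGraph

section SignlessLaplacian

variable {n : ℕ} (G : SimpleGraph (Fin n)) [DecidableRel G.Adj]

lemma signlessLaplacian_eq : signlessLaplacian G = G.degMatrix ℝ + G.adjMatrix ℝ := rfl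

lemma isHermitian_signlessLaplacian : (signlessLaplacian G).IsHermitian :=
  (G.isHermitian_degMatrix ℝ).add (G.isHermitian_adjMatrix ℝ)

lemma signlessLaplacian_nonneg (i j : Fin n) : 0 ≤ signlessLaplacian G i j := by
  rw [signlessLaplacian, Matrix.add_apply, diagonal_apply, adjMatrix_apply]
  positivity

lemma signlessLaplacian_mulVec_apply (y : Fin n → ℝ) (v : Fin n) :
    (signlessLaplacian G *ᵥ y) v = G.degree v * y v + ∑ u ∈ G.neighborFinset v, y u := by
  rw [signlessLaplacian_eq, add_mulVec, Pi.add_apply, degMatrix_mulVec_apply,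
    adjMatrix_mulVec_apply]

lemma two_mul_dotProduct_signlessLaplacian_mulVec (y : Fin n → ℝ) :
    2 * (y ⬝ᵥ (signlessLaplacian G *ᵥ y)) =
      ∑ i, ∑ j, if G.Adj i j then (y i + y j) ^ 2 else 0 := by
  have hdeg : y ⬝ᵥ (G.degMatrix ℝ *ᵥ y) = ∑ i, ∑ j, if G.Adj i j then y i ^ 2 else 0 := by
    simp_rw [dotProduct_mulVec_degMatrix, degree_eq_sum_if_adj, Finset.sum_mul, ite_mul, one_mul,
      zero_mul, sq]
  have hswap : (∑ i, ∑ j, if G.Adj i j then y j ^ 2 else 0) =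
      ∑ i, ∑ j, if G.Adj i j then y i ^ 2 else 0 := by
    rw [Finset.sum_comm]
    exact Finset.sum_congr rfl fun _ _ =>
      Finset.sum_congr rfl fun _ _ => if_congr (G.adj_comm _ _) rfl rfl
  have hexpand : (∑ i, ∑ j, if G.Adj i j then (y i + y j) ^ 2 else 0) =
      (∑ i, ∑ j, if G.Adj i j then y i ^ 2 else 0) +
        (∑ i, ∑ j, if G.Adj i j then y j ^ 2 else 0) +
          2 * ∑ i, ∑ j, if G.Adj i j then y i * y j else 0 := by
    simp_rw [Finset.mul_sum, ← Finset.sum_add_distrib]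
    refine Finset.sum_congr rfl fun i _ => Finset.sum_congr rfl fun j _ => ?_
    split_ifs
    · ring
    · simp
  rw [signlessLaplacian_eq, add_mulVec, dotProduct_add, hdeg, dotProduct_mulVec_adjMatrix,
    hexpand, hswap]
  ring

lemma degree_le_qIndex (v : Fin n) : (G.degree v : ℝ) ≤ qIndex G := by
  have := (isHermitian_signlessLaplacian G).dotProduct_mulVec_le (Pi.single v 1)
  simpa [qIndex, signlessLaplacian, adjMatrix_apply] using this

variable {G} {H : SimpleGraph (Fin n)} [DecidableRel H.Adj]

lemma dotProduct_signlessLaplacian_mulVec_mono (hGH : G ≤ H) (y : Fin n → ℝ) :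
    y ⬝ᵥ (signlessLaplacian G *ᵥ y) ≤ y ⬝ᵥ (signlessLaplacian H *ᵥ y) := by
  rw [← mul_le_mul_iff_right₀ two_pos, two_mul_dotProduct_signlessLaplacian_mulVec,
    two_mul_dotProduct_signlessLaplacian_mulVec]
  refine Finset.sum_le_sum fun i _ => Finset.sum_le_sum fun j _ => ?_
  split_ifs with hG hH
  · rfl
  · exact absurd (hGH hG) hH
  · positivity
  · rfl

lemma qIndex_mono (hGH : G ≤ H) : qIndex G ≤ qIndex H := by
  cases isEmpty_or_nonempty (Fin n)
  · rw [qIndex, qIndex, Subsingleton.elim (signlessLaplacian G) (signlessLaplacian H)]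
  obtain ⟨y, hy_ne, hy⟩ := exists_mulVec_eq_smul_of_mem_spectrum
    (isHermitian_signlessLaplacian G).sSup_spectrum_mem
  refine le_of_mul_le_mul_right ?_ (by simpa using dotProduct_star_self_pos_iff.mpr hy_ne)
  calc qIndex G * (y ⬝ᵥ y) = y ⬝ᵥ (signlessLaplacian G *ᵥ y) := by
        rw [hy, dotProduct_smul, smul_eq_mul, qIndex]
    _ ≤ _ := dotProduct_signlessLaplacian_mulVec_mono hGH y
    _ ≤ _ := (isHermitian_signlessLaplacian H).dotProduct_mulVec_le y

lemma qIndex_lt_of_mulVec_eq {y : Fin n → ℝ} (hy_ne : y ≠ 0)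
    (hy : signlessLaplacian G *ᵥ y = qIndex G • y)
    (h : y ⬝ᵥ (signlessLaplacian G *ᵥ y) < y ⬝ᵥ (signlessLaplacian H *ᵥ y)) :
    qIndex G < qIndex H := by
  have hpos : 0 < y ⬝ᵥ y := by simpa using dotProduct_star_self_pos_iff.mpr hy_ne
  refine lt_of_mul_lt_mul_right ?_ hpos.le
  calc qIndex G * (y ⬝ᵥ y) = y ⬝ᵥ (signlessLaplacian G *ᵥ y) := by
        rw [hy, dotProduct_smul, smul_eq_mul]
    _ < _ := h
    _ ≤ _ := (isHermitian_signlessLaplacian H).dotProduct_mulVec_le y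

lemma qIndex_congr (e : G ≃g H) : qIndex G = qIndex H := by
  have : signlessLaplacian H = reindexAlgEquiv ℝ ℝ e.toEquiv (signlessLaplacian G) := by
    ext i j
    have hdeg : G.degree (e.toEquiv.symm i) = H.degree i := e.symm.degree_eq i
    have hadj : G.Adj (e.toEquiv.symm i) (e.toEquiv.symm j) ↔ H.Adj i j := e.symm.map_adj_iff
    simp [signlessLaplacian, diagonal_apply, adjMatrix_apply, hdeg, hadj]
  rw [qIndex, qIndex, this, AlgEquiv.spectrum_eq]

end SignlessLaplacian

section Eigenvector

variable {n : ℕ} {G : SimpleGraph (Fin n)} [DecidableRel G.Adj] {μ : ℝ} {y : Fin n → ℝ}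

lemma eq_zero_of_adj_of_eq_zero (hy : signlessLaplacian G *ᵥ y = μ • y) (hy_nonneg : 0 ≤ y)
    {u v : Fin n} (hv : y v = 0) (huv : G.Adj v u) : y u = 0 := by
  have h := congrFun hy v
  rw [signlessLaplacian_mulVec_apply, Pi.smul_apply, hv, smul_zero, mul_zero, zero_add] at h
  exact (Finset.sum_eq_zero_iff_of_nonneg fun u _ => hy_nonneg u).mp h u
    ((G.mem_neighborFinset _ _).mpr huv)

lemma pos_of_forall_adj (hy : signlessLaplacian G *ᵥ y = μ • y) (hy_nonneg : 0 ≤ y) (hy_ne : y ≠ 0)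
    {w : Fin n} (hw : ∀ v, v ≠ w → G.Adj w v) (v : Fin n) : 0 < y v := by
  refine (hy_nonneg v).lt_of_ne' fun hv => hy_ne ?_
  have hyw : y w = 0 := by
    obtain rfl | hvw := eq_or_ne v w
    · exact hv
    · exact eq_zero_of_adj_of_eq_zero hy hy_nonneg hv (hw v hvw).symm
  funext u
  obtain rfl | huw := eq_or_ne u w
  · exact hyw
  · exact eq_zero_of_adj_of_eq_zero hy hy_nonneg hyw (hw u huw)

lemma eq_of_insert_neighborFinset_eq (hy : signlessLaplacian G *ᵥ y = μ • y) {u v : Fin n}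
    (hμ : (G.degree u : ℝ) ≤ μ)
    (huv : insert u (G.neighborFinset u) = insert v (G.neighborFinset v)) : y u = y v := by
  have hrow : ∀ x, (μ - #(insert x (G.neighborFinset x)) + 2) * y x =
      ∑ z ∈ insert x (G.neighborFinset x), y z := by
    intro x
    have h := congrFun hy x
    rw [signlessLaplacian_mulVec_apply, Pi.smul_apply, smul_eq_mul] at h
    rw [Finset.card_insert_of_notMem (G.notMem_neighborFinset_self x),
      Finset.sum_insert (G.notMem_neighborFinset_self x), card_neighborFinset_eq_degree]
    push_cast
    linarith
  have hc : μ - #(insert u (G.neighborFinset u)) + 2 ≠ 0 := by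
    rw [Finset.card_insert_of_notMem (G.notMem_neighborFinset_self u),
      card_neighborFinset_eq_degree]
    push_cast
    linarith
  refine mul_left_cancel₀ hc ?_
  rw [hrow u, huv, ← hrow v]

lemma exists_pos_mulVec_eq_qIndex_smul {w : Fin n} (hw : ∀ v, v ≠ w → G.Adj w v) :
    ∃ y : Fin n → ℝ, (∀ v, 0 < y v) ∧ signlessLaplacian G *ᵥ y = qIndex G • y := by
  have : Nonempty (Fin n) := ⟨w⟩
  obtain ⟨y, hy_ne, hy_nonneg, hy⟩ :=
    (isHermitian_signlessLaplacian G).exists_nonneg_mulVec_eq_sSup_spectrum_smul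
      (signlessLaplacian_nonneg G)
  exact ⟨y, pos_of_forall_adj hy hy_nonneg hy_ne hw, hy⟩

end Eigenvector

section CompleteSplitGraph

variable {V : Type*}

/-- `S_{m,j} = K_j ∨ \overline{K}_{m-j}`, with the clique `K_j` on `D`. -/
def completeSplitGraph (D : Finset V) : SimpleGraph V :=
  SimpleGraph.fromRel fun a _ => a ∈ D

@[simp]
lemma completeSplitGraph_adj {D : Finset V} {a b : V} :
    (completeSplitGraph D).Adj a b ↔ a ≠ b ∧ (a ∈ D ∨ b ∈ D) :=
  SimpleGraph.fromRel_adj _ _ _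

lemma Snk_eq_completeSplitGraph (n k : ℕ) :
    Snk n k = completeSplitGraph ({i | i.val < k} : Finset (Fin n)) := by
  ext i j
  simp [Snk]

lemma eq_completeSplitGraph_of_iso {W : Type*} {H : SimpleGraph W} {D : Finset V}
    (e : H ≃g completeSplitGraph D) :
    H = completeSplitGraph (D.map e.symm.toEquiv.toEmbedding) := by
  ext a b
  rw [← e.map_adj_iff]
  simp only [completeSplitGraph_adj, Finset.mem_map_equiv, e.injective.ne_iff]
  rfl

lemma exists_completeSplitGraph_of_induce_iso {G : SimpleGraph V} {P : Finset V} {m s : ℕ}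
    (e : G.induce ↑P ≃g Snk m s) (hs : s ≤ m) :
    ∃ D ⊆ P, #D = s ∧ ∀ a ∈ P, ∀ b ∈ P, (G.Adj a b ↔ (completeSplitGraph D).Adj a b) := by
  rw [Snk_eq_completeSplitGraph] at e
  have hG := eq_completeSplitGraph_of_iso e
  refine ⟨(({i | i.val < s} : Finset (Fin m)).map e.symm.toEquiv.toEmbedding).map
    (Function.Embedding.subtype _), Finset.map_subtype_subset _, ?_, fun a ha b hb => ?_⟩
  · simp [Fin.card_filter_val_lt, hs]
  · have := congrArg (fun K => K.Adj ⟨a, ha⟩ ⟨b, hb⟩) hG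
    simpa [ha, hb] using this

variable [DecidableEq V]

instance (D : Finset V) : DecidableRel (completeSplitGraph D).Adj :=
  fun _ _ => decidable_of_iff' _ completeSplitGraph_adj

lemma completeSplitGraph_sup (A B : Finset V) :
    completeSplitGraph A ⊔ completeSplitGraph B = completeSplitGraph (A ∪ B) := by
  ext a b
  simp only [sup_adj, completeSplitGraph_adj, Finset.mem_union]
  tauto

lemma nonempty_iso_completeSplitGraph_of_card_eq [Fintype V] {A B : Finset V} (h : #A = #B) :
    Nonempty (completeSplitGraph A ≃g completeSplitGraph B) := by
  let σ := (Finset.equivOfCardEq h).extendSubtype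
  have hσ : ∀ a, σ a ∈ B ↔ a ∈ A := fun a => by
    by_cases ha : a ∈ A
    · exact iff_of_true (Equiv.extendSubtype_mem _ a ha) ha
    · exact iff_of_false (Equiv.extendSubtype_not_mem _ a ha) ha
  exact ⟨⟨σ, by simp [σ.injective.ne_iff, hσ]⟩⟩

end CompleteSplitGraph

section EdgeSums

variable {V : Type*} [DecidableEq V]

lemma sum_sum_completeSplitGraph {P D : Finset V} (hDP : D ⊆ P) {y : V → ℝ} {d : ℝ}
    (hyd : ∀ a ∈ D, y a = d) :
    ∑ a ∈ P, ∑ b ∈ P, (if (completeSplitGraph D).Adj a b then (y a + y b) ^ 2 else 0) =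
      2 * #D * ∑ b ∈ P, (d + y b) ^ 2 - 4 * #D * (#D + 1) * d ^ 2 := by
  have hrow_mem : ∀ a ∈ D, ∑ b ∈ P, (if (completeSplitGraph D).Adj a b then (y a + y b) ^ 2
      else 0) = ∑ b ∈ P, (d + y b) ^ 2 - (2 * d) ^ 2 := by
    intro a ha
    calc _ = ∑ b ∈ P.erase a, (d + y b) ^ 2 := by
          rw [← Finset.add_sum_erase P _ (hDP ha), if_neg (completeSplitGraph D).irrefl, zero_add]
          refine Finset.sum_congr rfl fun b hb => ?_
          rw [if_pos (by simp [(Finset.ne_of_mem_erase hb).symm, ha]), hyd a ha]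
      _ = _ := by rw [Finset.sum_erase_eq_sub (hDP ha), hyd a ha, two_mul]
  have hrow_notMem : ∀ a ∈ P \ D, ∑ b ∈ P, (if (completeSplitGraph D).Adj a b
      then (y a + y b) ^ 2 else 0) = #D * (d + y a) ^ 2 := by
    intro a ha
    have ha' : a ∉ D := (Finset.mem_sdiff.mp ha).2
    calc _ = ∑ b ∈ P, if b ∈ D then (d + y a) ^ 2 else 0 := by
          refine Finset.sum_congr rfl fun b _ => ?_
          by_cases hb : b ∈ D
          · rw [if_pos (by simp [ha', hb, ne_of_mem_of_not_mem hb ha' |>.symm]), if_pos hb,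
              hyd b hb, add_comm]
          · rw [if_neg (by simp [ha', hb]), if_neg hb]
      _ = #D * (d + y a) ^ 2 := by
          rw [Finset.sum_ite_mem, Finset.inter_eq_right.mpr hDP, Finset.sum_const, nsmul_eq_mul]
  have hD : ∑ b ∈ D, (d + y b) ^ 2 = #D * (2 * d) ^ 2 := by
    rw [Finset.sum_congr (g := fun _ => (2 * d) ^ 2) rfl fun b hb => by rw [hyd b hb, two_mul],
      Finset.sum_const, nsmul_eq_mul]
  rw [← Finset.sum_sdiff hDP, Finset.sum_congr rfl hrow_notMem, Finset.sum_congr rfl hrow_mem,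
    ← Finset.mul_sum, Finset.sum_sdiff_eq_sub hDP, hD, Finset.sum_const, nsmul_eq_mul]
  ring

lemma sum_sum_adj_biUnion {ι : Type*} {K : SimpleGraph V} [DecidableRel K.Adj]
    {P : ι → Finset V} (s : Finset ι) (hdisj : ∀ i j, i ≠ j → Disjoint (P i) (P j))
    (hsep : ∀ i j, i ≠ j → ∀ a ∈ P i, ∀ b ∈ P j, ¬ K.Adj a b) (f : V → V → ℝ) :
    ∑ a ∈ s.biUnion P, ∑ b ∈ s.biUnion P, (if K.Adj a b then f a b else 0) =
      ∑ i ∈ s, ∑ a ∈ P i, ∑ b ∈ P i, (if K.Adj a b then f a b else 0) := by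
  have hpd : (s : Set ι).PairwiseDisjoint P := fun i _ j _ hij => hdisj i j hij
  rw [Finset.sum_biUnion hpd]
  refine Finset.sum_congr rfl fun i hi => Finset.sum_congr rfl fun a ha => ?_
  rw [Finset.sum_biUnion hpd, Finset.sum_eq_single_of_mem i hi]
  exact fun j _ hji => Finset.sum_eq_zero fun b hb => if_neg (hsep i j hji.symm a ha b hb)

lemma sum_sum_adj_completeSplitGraph_singleton_sup [Fintype V] (K : SimpleGraph V)
    [DecidableRel K.Adj] (w : V) {f : V → V → ℝ} (hf : ∀ a b, f a b = f b a) :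
    ∑ a, ∑ b, (if (completeSplitGraph {w} ⊔ K).Adj a b then f a b else 0) =
      2 * ∑ b ∈ univ.erase w, f w b +
        ∑ a ∈ univ.erase w, ∑ b ∈ univ.erase w, (if K.Adj a b then f a b else 0) := by
  have hstar : ∀ b ∈ univ.erase w, (completeSplitGraph {w} ⊔ K).Adj w b := fun b hb =>
    Or.inl (by simpa using (Finset.ne_of_mem_erase hb).symm)
  have hrest : ∀ a ∈ univ.erase w, ∀ b ∈ univ.erase w,
      ((completeSplitGraph {w} ⊔ K).Adj a b ↔ K.Adj a b) := fun a ha b hb => by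
    simp [Finset.ne_of_mem_erase ha, Finset.ne_of_mem_erase hb]
  have hrow : ∀ a, ∑ b, (if (completeSplitGraph {w} ⊔ K).Adj a b then f a b else 0) =
      (if (completeSplitGraph {w} ⊔ K).Adj a w then f a w else 0) +
        ∑ b ∈ univ.erase w, (if (completeSplitGraph {w} ⊔ K).Adj a b then f a b else 0) :=
    fun a => (Finset.add_sum_erase _ _ (mem_univ w)).symm
  have hrow_w : ∑ b, (if (completeSplitGraph {w} ⊔ K).Adj w b then f w b else 0) =
      ∑ b ∈ univ.erase w, f w b := by
    rw [hrow, if_neg (SimpleGraph.irrefl _), zero_add]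
    exact Finset.sum_congr rfl fun b hb => if_pos (hstar b hb)
  have hrow_ne : ∀ a ∈ univ.erase w,
      ∑ b, (if (completeSplitGraph {w} ⊔ K).Adj a b then f a b else 0) =
        f w a + ∑ b ∈ univ.erase w, (if K.Adj a b then f a b else 0) := fun a ha => by
    rw [hrow, if_pos (hstar a ha).symm, hf,
      Finset.sum_congr rfl fun b hb => if_congr (hrest a ha b hb) rfl rfl]
  rw [← Finset.add_sum_erase _ _ (mem_univ w), hrow_w, Finset.sum_congr rfl hrow_ne,
    Finset.sum_add_distrib]
  ring

lemma sum_sum_completeSplitGraph_lt {ι : Type*} [Fintype ι] [Nontrivial ι] {P D : ι → Finset V}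
    (hdisj : ∀ i j, i ≠ j → Disjoint (P i) (P j)) (hDP : ∀ i, D i ⊆ P i)
    {s : ℕ} (hs : 0 < s) (hD : ∀ i, #(D i) = s) {y : V → ℝ} (hy_nonneg : 0 ≤ y) {d : ι → ℝ}
    (hd : ∀ i, 0 < d i) (hyd : ∀ i, ∀ a ∈ D i, y a = d i) {i₀ : ι} (hmax : ∀ i, d i ≤ d i₀) :
    ∑ i, ∑ a ∈ P i, ∑ b ∈ P i,
        (if (completeSplitGraph (D i)).Adj a b then (y a + y b) ^ 2 else 0) <
      ∑ a ∈ univ.biUnion P, ∑ b ∈ univ.biUnion P,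
        (if (completeSplitGraph (D i₀)).Adj a b then (y a + y b) ^ 2 else 0) := by
  classical
  have hD₀ : D i₀ ⊆ univ.biUnion P := (hDP i₀).trans (Finset.subset_biUnion_of_mem P (mem_univ i₀))
  rw [sum_sum_completeSplitGraph hD₀ (hyd i₀),
    Finset.sum_biUnion fun i _ j _ hij => hdisj i j hij,
    Finset.sum_congr rfl fun i _ => sum_sum_completeSplitGraph (hDP i) (hyd i)]
  simp only [hD]
  set g : ι → ℝ := fun i => 2 * s * ∑ b ∈ P i, ((d i₀ + y b) ^ 2 - (d i + y b) ^ 2) +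
    4 * s * (s + 1) * d i ^ 2 with hg
  have hg_pos : ∀ i, 0 < g i := fun i => by
    have : 0 ≤ ∑ b ∈ P i, ((d i₀ + y b) ^ 2 - (d i + y b) ^ 2) :=
      Finset.sum_nonneg fun b _ => sub_nonneg.mpr <|
        pow_le_pow_left₀ (add_nonneg (hd i).le (hy_nonneg b)) (by linarith [hmax i]) 2
    have := hd i
    positivity
  have hg_sum : ∑ i, g i = 2 * s * ∑ i, ∑ b ∈ P i, (d i₀ + y b) ^ 2 -
      ∑ i, (2 * s * ∑ b ∈ P i, (d i + y b) ^ 2 - 4 * s * (s + 1) * d i ^ 2) := by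
    rw [Finset.mul_sum, ← Finset.sum_sub_distrib]
    refine Finset.sum_congr rfl fun i _ => ?_
    simp only [hg, Finset.sum_sub_distrib]
    ring
  obtain ⟨j, hj⟩ := exists_ne i₀
  have hpair : g i₀ + g j ≤ ∑ i, g i := by
    rw [← Finset.sum_pair hj.symm]
    exact Finset.sum_le_sum_of_subset_of_nonneg (subset_univ _) fun i _ _ => (hg_pos i).le
  have hg₀ : g i₀ = 4 * s * (s + 1) * d i₀ ^ 2 := by simp [hg]
  linarith [hg_pos j]

end EdgeSums

section Partition

variable {V ι : Type*} [Fintype V] [DecidableEq V] [Fintype ι] {P : ι → Finset V} {w : V}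

lemma notMem_of_biUnion_eq_erase (hcover : univ.biUnion P = univ.erase w) (i : ι) : w ∉ P i :=
  fun hw => by simpa [hcover] using Finset.mem_biUnion.mpr ⟨i, mem_univ i, hw⟩

lemma mem_or_eq_of_adj {G : SimpleGraph V} (hcover : univ.biUnion P = univ.erase w)
    (hsep : ∀ i j, i ≠ j → ∀ a ∈ P i, ∀ b ∈ P j, ¬ G.Adj a b) {i : ι} {a b : V} (ha : a ∈ P i)
    (hab : G.Adj a b) : b ∈ P i ∨ b = w := by
  by_contra! h
  obtain ⟨j, -, hbj⟩ := Finset.mem_biUnion.mp (hcover ▸ Finset.mem_erase.mpr ⟨h.2, mem_univ b⟩)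
  exact hsep i j (by rintro rfl; exact h.1 hbj) a ha b hbj hab

end Partition

lemma insert_neighborFinset_sup_eq {V : Type*} [Fintype V] [DecidableEq V] {G : SimpleGraph V}
    [DecidableRel G.Adj] {w a : V} {P D : Finset V} (haD : a ∈ D) (hDP : D ⊆ P) (hwP : w ∉ P)
    (hGD : ∀ b ∈ P, (G.Adj a b ↔ (completeSplitGraph D).Adj a b))
    (hout : ∀ b, G.Adj a b → b ∈ P ∨ b = w) :
    insert a ((completeSplitGraph {w} ⊔ G).neighborFinset a) = insert w P := by
  have haw : a ≠ w := ne_of_mem_of_not_mem (hDP haD) hwP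
  ext b
  simp only [Finset.mem_insert, mem_neighborFinset, sup_adj, completeSplitGraph_adj,
    Finset.mem_singleton]
  constructor
  · rintro (rfl | ⟨-, rfl | rfl⟩ | hab)
    · exact Or.inr (hDP haD)
    · exact absurd rfl haw
    · exact Or.inl rfl
    · exact (hout b hab).symm
  · rintro (rfl | hb)
    · exact Or.inr (Or.inl ⟨haw, Or.inr rfl⟩)
    · by_cases hba : b = a
      · exact Or.inl hba
      · exact Or.inr (Or.inr ((hGD b hb).mpr ⟨Ne.symm hba, Or.inl haD⟩))

lemma apply_eq_apply_of_mem_of_mem {n : ℕ} {G : SimpleGraph (Fin n)} [DecidableRel G.Adj]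
    {w : Fin n} {P D : Finset (Fin n)} (hDP : D ⊆ P) (hwP : w ∉ P)
    (hGD : ∀ a ∈ P, ∀ b ∈ P, (G.Adj a b ↔ (completeSplitGraph D).Adj a b))
    (hout : ∀ a ∈ P, ∀ b, G.Adj a b → b ∈ P ∨ b = w) {y : Fin n → ℝ}
    (hy : signlessLaplacian (completeSplitGraph {w} ⊔ G) *ᵥ y =
      qIndex (completeSplitGraph {w} ⊔ G) • y) {a b : Fin n} (ha : a ∈ D) (hb : b ∈ D) :
    y a = y b := by
  refine eq_of_insert_neighborFinset_eq hy (degree_le_qIndex _ a) ?_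
  rw [insert_neighborFinset_sup_eq ha hDP hwP (hGD a (hDP ha)) (hout a (hDP ha)),
    insert_neighborFinset_sup_eq hb hDP hwP (hGD b (hDP hb)) (hout b (hDP hb))]

lemma dotProduct_signlessLaplacian_sup_mulVec_lt {n : ℕ} {ι : Type*} [Fintype ι] [Nontrivial ι]
    {G : SimpleGraph (Fin n)} [DecidableRel G.Adj] {w : Fin n} {P D : ι → Finset (Fin n)}
    (hdisj : ∀ i j, i ≠ j → Disjoint (P i) (P j)) (hcover : univ.biUnion P = univ.erase w)
    (hsep : ∀ i j, i ≠ j → ∀ a ∈ P i, ∀ b ∈ P j, ¬ G.Adj a b) (hDP : ∀ i, D i ⊆ P i) {s : ℕ}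
    (hs : 0 < s) (hD : ∀ i, #(D i) = s)
    (hGD : ∀ i, ∀ a ∈ P i, ∀ b ∈ P i, (G.Adj a b ↔ (completeSplitGraph (D i)).Adj a b))
    {y : Fin n → ℝ} (hy_nonneg : 0 ≤ y) {d : ι → ℝ} (hd : ∀ i, 0 < d i)
    (hyd : ∀ i, ∀ a ∈ D i, y a = d i) {i₀ : ι} (hmax : ∀ i, d i ≤ d i₀) :
    y ⬝ᵥ (signlessLaplacian (completeSplitGraph {w} ⊔ G) *ᵥ y) <
      y ⬝ᵥ (signlessLaplacian (completeSplitGraph {w} ⊔ completeSplitGraph (D i₀)) *ᵥ y) := by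
  have hf : ∀ a b, (y a + y b) ^ 2 = (y b + y a) ^ 2 := fun _ _ => by ring
  rw [← mul_lt_mul_iff_right₀ two_pos, two_mul_dotProduct_signlessLaplacian_mulVec,
    two_mul_dotProduct_signlessLaplacian_mulVec,
    sum_sum_adj_completeSplitGraph_singleton_sup _ _ hf,
    sum_sum_adj_completeSplitGraph_singleton_sup _ _ hf, ← hcover,
    sum_sum_adj_biUnion univ hdisj hsep, add_lt_add_iff_left]
  calc _ = ∑ i, ∑ a ∈ P i, ∑ b ∈ P i,
        (if (completeSplitGraph (D i)).Adj a b then (y a + y b) ^ 2 else 0) :=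
        Finset.sum_congr rfl fun i _ => Finset.sum_congr rfl fun a ha =>
          Finset.sum_congr rfl fun b hb => if_congr (hGD i a ha b hb) rfl rfl
    _ < _ := sum_sum_completeSplitGraph_lt hdisj hDP hs hD hy_nonneg hd hyd hmax

lemma nonempty_completeSplitGraph_iso_Snk {n k : ℕ} {C : Finset (Fin n)} (hC : #C = k) :
    Nonempty (completeSplitGraph C ≃g Snk n k) := by
  have hkn : k ≤ n := hC ▸ (card_le_univ _).trans_eq (Fintype.card_fin n)
  rw [Snk_eq_completeSplitGraph]
  exact nonempty_iso_completeSplitGraph_of_card_eq <| by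
    rw [hC, Fin.card_filter_val_lt, min_eq_right hkn]

theorem stmt10 {n k t : ℕ} (hk : 3 ≤ k) (ht : 2 ≤ t) (G : SimpleGraph (Fin n))
    [DecidableRel G.Adj] (w : Fin n) (P : Fin t → Finset (Fin n))
    (hdisj : ∀ i j, i ≠ j → Disjoint (P i) (P j))
    (hcover : Finset.univ.biUnion P = Finset.univ.erase w)
    (hsep : ∀ i j, i ≠ j → ∀ a ∈ P i, ∀ b ∈ P j, ¬ G.Adj a b)
    (hcard : ∀ i, k - 1 ≤ (P i).card)
    (hiso : ∀ i, Nonempty ((G.induce ↑(P i)) ≃g Snk (P i).card (k - 1))) :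
    qIndex G < qIndex (Snk n k) := by
  classical
  choose D hDP hD hGD using fun i => exists_completeSplitGraph_of_induce_iso (hiso i).some (hcard i)
  have hwP := notMem_of_biUnion_eq_erase hcover
  obtain ⟨y, hy_pos, hy⟩ := exists_pos_mulVec_eq_qIndex_smul (G := completeSplitGraph {w} ⊔ G)
    (w := w) fun v hv => Or.inl (by simpa using hv.symm)
  choose a ha using fun i => Finset.card_pos.mp (show 0 < #(D i) by rw [hD i]; omega)
  obtain ⟨i₀, -, hmax⟩ := Finset.exists_max_image univ (fun i => y (a i))
    (univ_nonempty_iff.mpr ⟨⟨0, by omega⟩⟩)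
  have : Nontrivial (Fin t) := Fin.nontrivial_iff_two_le.mpr ht
  have hC : #({w} ∪ D i₀) = k := by
    rw [Finset.card_union_of_disjoint (Finset.disjoint_singleton_left.mpr fun h =>
      hwP i₀ (hDP i₀ h)), Finset.card_singleton, hD]
    omega
  calc qIndex G ≤ qIndex (completeSplitGraph {w} ⊔ G) := qIndex_mono le_sup_right
    _ < qIndex (completeSplitGraph {w} ⊔ completeSplitGraph (D i₀)) :=
      qIndex_lt_of_mulVec_eq (fun h => (hy_pos w).ne' (congrFun h w)) hy <|
        dotProduct_signlessLaplacian_sup_mulVec_lt hdisj hcover hsep hDP (by omega) hD hGD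
          (fun v => (hy_pos v).le) (fun i => hy_pos (a i))
          (fun i b hb => apply_eq_apply_of_mem_of_mem (hDP i) (hwP i) (hGD i)
            (fun _ ha _ => mem_or_eq_of_adj hcover hsep ha) hy hb (ha i))
          fun i => hmax i (mem_univ i)
    _ = qIndex (Snk n k) :=
      qIndex_congr (completeSplitGraph_sup {w} (D i₀) ▸ nonempty_completeSplitGraph_iso_Snk hC).some
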